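/- arXiv:1706.01862 — 2 statements merged into one kernel-verified Lean document; each statement's English description precedes it below -/
import Mathlib

section
/- For the Watson distribution $f(u) = \frac{1}{4\pi M(1/2,3/2,\kappa)} \exp(\kappa (u^T n_0)^2)$ with $\kappa > 0$, the orientational order along the axis $n_0$ is $\mathrm{OO}(n_0) = \frac{3 e^\kappa}{2\sqrt{\kappa\pi}\,\mathrm{Erfi}(\sqrt\kappa)} - \frac{3 + 2\kappa}{4\kappa}$, where $\mathrm{Erfi}(x) = \frac{2}{\sqrt\pi}\int_0^x e^{t^2}dt$. -/
open MeasureTheory Metric Matrix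
open scoped RealInnerProductSpace

/-- The standard surface measure on the unit sphere in ℝ³ (total mass 4π). -/
noncomputable def sphereMeasure :
    Measure (sphere (0 : EuclideanSpace ℝ (Fin 3)) 1) :=
  (volume : Measure (EuclideanSpace ℝ (Fin 3))).toSphere

/-- The imaginary error function `Erfi(x) = (2/√π) ∫₀ˣ exp(t²) dt`. -/
noncomputable def Erfi (x : ℝ) : ℝ :=
  2 / Real.sqrt Real.pi * ∫ t in (0 : ℝ)..x, Real.exp (t ^ 2)

/-- The confluent hypergeometric value `M(1/2, 3/2, κ) = √π Erfi(√κ)/(2√κ)`,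
which normalizes the Watson distribution. -/
noncomputable def Mkummer (κ : ℝ) : ℝ :=
  Real.sqrt Real.pi * Erfi (Real.sqrt κ) / (2 * Real.sqrt κ)

/-!
Integrating the Gaussian `⟪x, n⟫ ^ (2m) * exp (-‖x‖²)` over `ℝ³` once in polar coordinates and
once as a product over an orthonormal basis through `n` gives the moments
`∫_{S²} ⟪u, n⟫ ^ (2m) dσ = 4π / (2m + 1) = 4π ∫₀¹ s ^ (2m) ds` (Archimedes' hat-box theorem for
even monomials). Expanding `exp (κ t²)` in its power series and integrating termwise turns the
Watson integrals into `4π ∫₀¹ (a s² + b) exp (κ s²) ds`. Since `s exp (κ s²)` has derivative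
`(1 + 2κ s²) exp (κ s²)`, these reduce to `exp κ` and `P = ∫₀¹ exp (κ s²) ds`, and both
`M(1/2, 3/2, κ)` and `√(κπ) Erfi (√κ) / (2κ)` equal `P`.
-/

open Set Real Filter

local notation "ℝ³" => EuclideanSpace ℝ (Fin 3)

section Polar

variable {E : Type*} [NormedAddCommGroup E] [NormedSpace ℝ E] [FiniteDimensional ℝ E]
  [MeasurableSpace E] [BorelSpace E] [Nontrivial E] (μ : Measure E) [μ.IsAddHaarMeasure]

theorem integral_eq_integral_toSphere_mul_integral_Ioi (g : sphere (0 : E) 1 → ℝ) (w : ℝ → ℝ)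
    (G : E → ℝ) (hG : ∀ (u : sphere (0 : E) 1) (r : ℝ), 0 < r → G (r • (u : E)) = g u * w r) :
    ∫ x, G x ∂μ =
      (∫ u, g u ∂μ.toSphere) * ∫ r in Ioi (0 : ℝ), r ^ (Module.finrank ℝ E - 1) * w r := by
  set d := Module.finrank ℝ E - 1
  calc ∫ x, G x ∂μ = ∫ x : ({(0 : E)}ᶜ : Set E), G x ∂(μ.comap Subtype.val) := by
        rw [integral_subtype_comap (measurableSet_singleton _).compl, restrict_compl_singleton]
    _ = ∫ p : sphere (0 : E) 1 × Ioi (0 : ℝ), g p.1 * w p.2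
          ∂μ.toSphere.prod (.volumeIoiPow d) := by
        rw [← (μ.measurePreserving_homeomorphUnitSphereProd).integral_comp
          (Homeomorph.measurableEmbedding _)]
        refine integral_congr_ae (Eventually.of_forall fun x => ?_)
        have hx : 0 < ‖(x : E)‖ := norm_pos_iff.2 x.2
        simpa [smul_inv_smul₀ hx.ne'] using hG ((homeomorphUnitSphereProd E) x).1 ‖(x : E)‖ hx
    _ = (∫ u, g u ∂μ.toSphere) * ∫ r : Ioi (0 : ℝ), w r ∂(.volumeIoiPow d) :=
        integral_prod_mul (fun u => g u) (fun r : Ioi (0 : ℝ) => w r)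
    _ = _ := by
        congr 1
        simp only [Measure.volumeIoiPow, ENNReal.ofReal]
        rw [integral_withDensity_eq_integral_smul
            (measurable_subtype_coe.pow_const _).real_toNNReal,
          integral_subtype_comap measurableSet_Ioi fun r => (r ^ d).toNNReal • w r]
        refine setIntegral_congr_fun measurableSet_Ioi fun r hr => ?_
        rw [NNReal.smul_def, coe_toNNReal _ (pow_nonneg (le_of_lt hr) _), smul_eq_mul]

end Polar

theorem integral_Ioi_pow_mul_exp_neg_sq (n : ℕ) :
    ∫ r in Ioi (0 : ℝ), r ^ n * exp (-r ^ 2) = Gamma ((n + 1) / 2) / 2 := by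
  have h := integral_rpow_mul_exp_neg_rpow two_pos (neg_one_lt_zero.trans_le n.cast_nonneg)
  rw [one_div_mul_eq_div] at h
  rw [← h]
  refine setIntegral_congr_fun measurableSet_Ioi fun r _ => ?_
  simp only [rpow_natCast, rpow_two]

theorem integral_pow_two_mul_mul_exp_neg_sq (m : ℕ) :
    ∫ t : ℝ, t ^ (2 * m) * exp (-t ^ 2) = Gamma (m + 1 / 2) := by
  have h := integral_comp_abs (f := fun t => t ^ (2 * m) * exp (-t ^ 2))
  simp only [(even_two_mul m).pow_abs, sq_abs] at h
  rw [h, integral_Ioi_pow_mul_exp_neg_sq]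
  push_cast
  ring_nf

theorem EuclideanSpace.integral_comp_apply_mul_exp_neg_norm_sq {ι : Type*} [Fintype ι]
    [DecidableEq ι] (i₀ : ι) (φ : ℝ → ℝ) :
    ∫ x : EuclideanSpace ℝ ι, φ (x i₀) * exp (-‖x‖ ^ 2) =
      (∫ t, φ t * exp (-t ^ 2)) * √π ^ (Fintype.card ι - 1) := by
  set f : ι → ℝ → ℝ :=
    Function.update (fun _ t => exp (-t ^ 2)) i₀ (fun t => φ t * exp (-t ^ 2))
  have hprod : ∀ z : ι → ℝ, φ (z i₀) * exp (-‖WithLp.toLp 2 z‖ ^ 2) = ∏ i, f i (z i) := by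
    intro z
    rw [EuclideanSpace.norm_sq_eq, ← Finset.sum_neg_distrib, exp_sum,
      ← Finset.mul_prod_erase _ _ (Finset.mem_univ i₀),
      ← Finset.mul_prod_erase _ (fun i => f i (z i)) (Finset.mem_univ i₀), ← mul_assoc]
    congr 1
    · simp [f]
    · refine Finset.prod_congr rfl fun i hi => ?_
      simp [f, Function.update_of_ne (Finset.ne_of_mem_erase hi)]
  rw [← (PiLp.volume_preserving_toLp ι).integral_comp
    (MeasurableEquiv.toLp 2 (ι → ℝ)).measurableEmbedding]
  have hfactor :
      (fun i => ∫ t, f i t) = Function.update (fun _ => √π) i₀ (∫ t, φ t * exp (-t ^ 2)) := by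
    ext i
    rcases eq_or_ne i i₀ with rfl | hi
    · simp [f]
    · simpa [f, hi] using integral_gaussian 1
  simp only [hprod]
  rw [volume_pi, integral_fintype_prod_eq_prod, hfactor,
    Finset.prod_update_of_mem (Finset.mem_univ _), Finset.prod_const, Finset.card_sdiff]
  simp

section InnerProductSpace

variable {E : Type*} [NormedAddCommGroup E] [InnerProductSpace ℝ E] [FiniteDimensional ℝ E]
  [MeasurableSpace E] [BorelSpace E] {n : E}

theorem integral_comp_inner_mul_exp_neg_norm_sq (hn : ‖n‖ = 1) (φ : ℝ → ℝ) :
    ∫ x : E, φ ⟪x, n⟫ * exp (-‖x‖ ^ 2) =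
      (∫ t, φ t * exp (-t ^ 2)) * √π ^ (Module.finrank ℝ E - 1) := by
  have hon : Orthonormal ℝ ((↑) : ({n} : Set E) → E) :=
    ⟨fun i => by rw [i.2]; exact hn, fun i j hij => (hij (Subtype.ext (i.2.trans j.2.symm))).elim⟩
  obtain ⟨u, b, hnu, hb⟩ := hon.exists_orthonormalBasis_extension
  classical
  let i₀ : u := ⟨n, hnu rfl⟩
  have hrepr : ∀ x, φ ⟪x, n⟫ * exp (-‖x‖ ^ 2) = φ (b.repr x i₀) * exp (-‖b.repr x‖ ^ 2) := by
    intro x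
    rw [b.repr.norm_map, b.repr_apply_apply, hb, real_inner_comm]
  simp_rw [hrepr]
  rw [b.measurePreserving_repr.integral_comp b.repr.toHomeomorph.measurableEmbedding
      (fun y => φ (y i₀) * exp (-‖y‖ ^ 2)),
    EuclideanSpace.integral_comp_apply_mul_exp_neg_norm_sq, Module.finrank_eq_card_basis b.toBasis]

theorem integral_toSphere_inner_pow_two_mul (hn : ‖n‖ = 1) (m : ℕ) :
    ∫ u, ⟪(u : E), n⟫ ^ (2 * m) ∂(volume : Measure E).toSphere =
      2 * √π ^ (Module.finrank ℝ E - 1) * Gamma (m + 1 / 2) /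
        Gamma (m + Module.finrank ℝ E / 2) := by
  have : Nontrivial E := nontrivial_of_ne n 0 (norm_ne_zero_iff.1 (by simp [hn]))
  have hpolar := integral_eq_integral_toSphere_mul_integral_Ioi volume
    (fun u => ⟪(u : E), n⟫ ^ (2 * m)) (fun r => r ^ (2 * m) * exp (-r ^ 2))
    (fun x => ⟪x, n⟫ ^ (2 * m) * exp (-‖x‖ ^ 2)) fun u r hr => by
      rw [real_inner_smul_left, norm_smul, norm_of_nonneg hr.le,
        mem_sphere_zero_iff_norm.1 u.2, mul_one, mul_pow]
      ring
  set d := Module.finrank ℝ E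
  have hd : 1 ≤ d := Module.finrank_pos
  have hradial : ∫ r in Ioi (0 : ℝ), r ^ (d - 1) * (r ^ (2 * m) * exp (-r ^ 2)) =
      Gamma (m + d / 2) / 2 := by
    simp_rw [← mul_assoc, ← pow_add]
    rw [integral_Ioi_pow_mul_exp_neg_sq]
    congr 2
    push_cast [Nat.cast_sub hd]
    ring
  rw [integral_comp_inner_mul_exp_neg_norm_sq hn (fun t => t ^ (2 * m)),
    integral_pow_two_mul_mul_exp_neg_sq, hradial] at hpolar
  have hΓ : 0 < Gamma (m + d / 2) := Gamma_pos_of_pos (by positivity)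
  rw [eq_div_iff hΓ.ne']
  linear_combination -2 * hpolar

end InnerProductSpace

theorem integral_pow_mul_exp_mul_sq_eq_tsum {X : Type*} [MeasurableSpace X] (μ : Measure X)
    [IsFiniteMeasure μ] (κ : ℝ) (j : ℕ) {t : X → ℝ} (ht : AEStronglyMeasurable t μ)
    (hbd : ∀ᵐ x ∂μ, |t x| ≤ 1) :
    ∫ x, t x ^ (2 * j) * exp (κ * t x ^ 2) ∂μ =
      ∑' m : ℕ, κ ^ m / m.factorial * ∫ x, t x ^ (2 * (m + j)) ∂μ := by
  have hexp : ∀ s : ℝ, s ^ (2 * j) * exp (κ * s ^ 2) =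
      ∑' m : ℕ, κ ^ m / m.factorial * s ^ (2 * (m + j)) := by
    intro s
    rw [exp_eq_exp_ℝ, NormedSpace.exp_eq_tsum_div, ← tsum_mul_left]
    refine tsum_congr fun m => ?_
    rw [mul_pow, ← pow_mul, Nat.mul_add, pow_add]
    ring
  set F : ℕ → X → ℝ := fun m x => κ ^ m / m.factorial * t x ^ (2 * (m + j))
  have hbound : ∀ m, ∀ᵐ x ∂μ, ‖F m x‖ ≤ |κ| ^ m / m.factorial := by
    intro m
    filter_upwards [hbd] with x hx
    rw [norm_mul, norm_pow, norm_div, norm_pow, norm_natCast, norm_eq_abs, norm_eq_abs]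
    exact mul_le_of_le_one_right (by positivity) (pow_le_one₀ (abs_nonneg _) hx)
  have hint : ∀ m, Integrable (F m) μ := fun m =>
    .of_bound ((ht.pow _).const_mul _) _ (hbound m)
  have hsum : Summable fun m => ∫ x, ‖F m x‖ ∂μ := by
    refine ((summable_pow_div_factorial |κ|).mul_left (μ.real univ)).of_nonneg_of_le
      (fun m => integral_nonneg fun _ => norm_nonneg _) fun m => ?_
    simpa using integral_mono_ae (hint m).norm (integrable_const _) (hbound m)
  simp_rw [hexp]
  rw [← integral_tsum_of_summable_integral_norm hint hsum]
  simp_rw [F, integral_const_mul]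

instance : IsFiniteMeasure sphereMeasure :=
  inferInstanceAs (IsFiniteMeasure (volume : Measure (ℝ³)).toSphere)

theorem integral_sphereMeasure_inner_pow_two_mul {n : ℝ³} (hn : ‖n‖ = 1) (m : ℕ) :
    ∫ u, ⟪(u : ℝ³), n⟫ ^ (2 * m) ∂sphereMeasure = 4 * π / (2 * m + 1) := by
  rw [sphereMeasure, integral_toSphere_inner_pow_two_mul hn, finrank_euclideanSpace_fin,
    show (m : ℝ) + (3 : ℕ) / 2 = m + 1 / 2 + 1 by push_cast; ring,
    Gamma_add_one (by positivity), show 3 - 1 = 2 from rfl, sq_sqrt pi_nonneg]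
  have : 0 < Gamma (m + 1 / 2) := Gamma_pos_of_pos (by positivity)
  field_simp
  ring

theorem integral_sphereMeasure_inner_pow_mul_exp (κ : ℝ) (j : ℕ) {n : ℝ³} (hn : ‖n‖ = 1) :
    ∫ u, ⟪(u : ℝ³), n⟫ ^ (2 * j) * exp (κ * ⟪(u : ℝ³), n⟫ ^ 2) ∂sphereMeasure =
      4 * π * ∫ s in (0 : ℝ)..1, s ^ (2 * j) * exp (κ * s ^ 2) := by
  have hbd (u : sphere (0 : ℝ³) 1) : |⟪(u : ℝ³), n⟫| ≤ 1 := by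
    simpa [hn] using abs_real_inner_le_norm (u : ℝ³) n
  rw [integral_pow_mul_exp_mul_sq_eq_tsum sphereMeasure κ j
      (continuous_subtype_val.inner continuous_const).aestronglyMeasurable (ae_of_all _ hbd),
    intervalIntegral.integral_of_le zero_le_one,
    integral_pow_mul_exp_mul_sq_eq_tsum _ κ j (t := fun s => s) aestronglyMeasurable_id
      ((ae_restrict_iff' measurableSet_Ioc).2 (ae_of_all _ fun s hs => by
        rw [abs_of_pos hs.1]; exact hs.2)),
    ← tsum_mul_left]
  refine tsum_congr fun m => ?_
  rw [integral_sphereMeasure_inner_pow_two_mul hn, ← intervalIntegral.integral_of_le zero_le_one,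
    integral_pow]
  push_cast
  ring

theorem integral_sphereMeasure_quadratic_mul_exp (a b κ : ℝ) {n : ℝ³} (hn : ‖n‖ = 1) :
    ∫ u, (a * ⟪(u : ℝ³), n⟫ ^ 2 + b) * exp (κ * ⟪(u : ℝ³), n⟫ ^ 2) ∂sphereMeasure =
      4 * π * ∫ s in (0 : ℝ)..1, (a * s ^ 2 + b) * exp (κ * s ^ 2) := by
  have hint₀ : Integrable (fun u : sphere (0 : ℝ³) 1 => exp (κ * ⟪(u : ℝ³), n⟫ ^ 2))
      sphereMeasure :=
    (by fun_prop : Continuous _).integrable_of_hasCompactSupport (.of_compactSpace _)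
  have hint₁ : Integrable (fun u : sphere (0 : ℝ³) 1 =>
      ⟪(u : ℝ³), n⟫ ^ 2 * exp (κ * ⟪(u : ℝ³), n⟫ ^ 2)) sphereMeasure :=
    (by fun_prop : Continuous _).integrable_of_hasCompactSupport (.of_compactSpace _)
  have h₀ := integral_sphereMeasure_inner_pow_mul_exp κ 0 hn
  have h₁ := integral_sphereMeasure_inner_pow_mul_exp κ 1 hn
  simp only [mul_zero, mul_one, pow_zero, one_mul] at h₀ h₁
  simp_rw [add_mul, mul_assoc a]
  rw [integral_add (hint₁.const_mul a) (hint₀.const_mul b), integral_const_mul,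
    integral_const_mul, h₀, h₁, intervalIntegral.integral_add
      ((by fun_prop : Continuous _).intervalIntegrable _ _)
      ((by fun_prop : Continuous _).intervalIntegrable _ _),
    intervalIntegral.integral_const_mul, intervalIntegral.integral_const_mul]
  ring

theorem intervalIntegral_one_add_two_mul_sq_mul_exp (κ : ℝ) :
    ∫ s in (0 : ℝ)..1, (1 + 2 * κ * s ^ 2) * exp (κ * s ^ 2) = exp κ := by
  have hderiv (s : ℝ) : HasDerivAt (fun s => s * exp (κ * s ^ 2))
      ((1 + 2 * κ * s ^ 2) * exp (κ * s ^ 2)) s := by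
    refine ((hasDerivAt_id' s).fun_mul ((hasDerivAt_pow 2 s).const_mul κ).exp).congr_deriv ?_
    push_cast
    ring
  rw [intervalIntegral.integral_eq_sub_of_hasDerivAt (fun s _ => hderiv s)
    ((by fun_prop : Continuous _).intervalIntegrable _ _)]
  simp

theorem Erfi_sqrt_eq_mul_integral {κ : ℝ} (hκ : 0 ≤ κ) :
    Erfi √κ = 2 * √κ / √π * ∫ s in (0 : ℝ)..1, exp (κ * s ^ 2) := by
  have h := intervalIntegral.smul_integral_comp_mul_left (a := 0) (b := 1)
    (fun t => exp (t ^ 2)) √κ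
  simp only [mul_zero, mul_one, smul_eq_mul, mul_pow, sq_sqrt hκ] at h
  rw [Erfi, ← h]
  ring

theorem Mkummer_eq_integral {κ : ℝ} (hκ : 0 < κ) :
    Mkummer κ = ∫ s in (0 : ℝ)..1, exp (κ * s ^ 2) := by
  have : 0 < √κ := sqrt_pos.2 hκ
  rw [Mkummer, Erfi_sqrt_eq_mul_integral hκ.le]
  field_simp

theorem intervalIntegral_quadratic_mul_exp {κ : ℝ} (hκ : κ ≠ 0) (a b : ℝ) :
    ∫ s in (0 : ℝ)..1, (a * s ^ 2 + b) * exp (κ * s ^ 2) =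
      (a * exp κ + (2 * κ * b - a) * ∫ s in (0 : ℝ)..1, exp (κ * s ^ 2)) / (2 * κ) := by
  have hsplit : (fun s : ℝ => (a * s ^ 2 + b) * exp (κ * s ^ 2)) = fun s =>
      a / (2 * κ) * ((1 + 2 * κ * s ^ 2) * exp (κ * s ^ 2)) +
        (2 * κ * b - a) / (2 * κ) * exp (κ * s ^ 2) := by
    ext s
    field_simp
    ring
  rw [hsplit, intervalIntegral.integral_add ((by fun_prop : Continuous _).intervalIntegrable _ _)
      ((by fun_prop : Continuous _).intervalIntegrable _ _),
    intervalIntegral.integral_const_mul, intervalIntegral.integral_const_mul,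
    intervalIntegral_one_add_two_mul_sq_mul_exp]
  field_simp

/-- For the Watson distribution
`f(u) = exp(κ (uᵀn₀)²) / (4π M(1/2,3/2,κ))` with `κ > 0`,
`OO(n₀) = 3eᵏ/(2√(κπ) Erfi(√κ)) - (3+2κ)/(4κ)`. -/
theorem oo_watson
    (κ : ℝ) (hκ : 0 < κ)
    (n₀ : EuclideanSpace ℝ (Fin 3)) (hn₀ : ‖n₀‖ = 1)
    (f : sphere (0 : EuclideanSpace ℝ (Fin 3)) 1 → ℝ)
    (hf : ∀ u, f u = 1 / (4 * Real.pi * Mkummer κ) *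
      Real.exp (κ * (⟪(u : EuclideanSpace ℝ (Fin 3)), n₀⟫ : ℝ) ^ 2)) :
    (∫ u, (3 * (⟪(u : EuclideanSpace ℝ (Fin 3)), n₀⟫ : ℝ) ^ 2 - 1) / 2 * f u
        ∂sphereMeasure)
      = 3 * Real.exp κ / (2 * Real.sqrt (κ * Real.pi) * Erfi (Real.sqrt κ))
        - (3 + 2 * κ) / (4 * κ) := by
  have hintegrand (u : sphere (0 : ℝ³) 1) :
      (3 * ⟪(u : ℝ³), n₀⟫ ^ 2 - 1) / 2 * f u =
        1 / (4 * π * Mkummer κ) *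
          ((3 / 2 * ⟪(u : ℝ³), n₀⟫ ^ 2 + -1 / 2) * exp (κ * ⟪(u : ℝ³), n₀⟫ ^ 2)) := by
    rw [hf]
    ring
  have hP : 0 < ∫ s in (0 : ℝ)..1, exp (κ * s ^ 2) :=
    intervalIntegral.intervalIntegral_pos_of_pos_on
      ((by fun_prop : Continuous _).intervalIntegrable _ _) (fun _ _ => exp_pos _) one_pos
  simp_rw [hintegrand]
  rw [integral_const_mul, integral_sphereMeasure_quadratic_mul_exp _ _ _ hn₀,
    intervalIntegral_quadratic_mul_exp hκ.ne', Mkummer_eq_integral hκ, sqrt_mul hκ.le,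
    Erfi_sqrt_eq_mul_integral hκ.le]
  field_simp
  rw [sq_sqrt hκ.le]
  ring
end

section
/- The tensor ODF $\Phi(u) = \frac{1}{4\pi |D|^{1/2}}(u^T D^{-1} u)^{-3/2}$ of a symmetric positive definite $3\times 3$ matrix $D$ has unit integral over the unit sphere: $\int_{\mathbb{S}^2} \Phi(u)\, du = 1$. -/
open MeasureTheory Metric Matrix
open scoped RealInnerProductSpace

/-!
Both sides are read off the Gaussian integral `G(M) = ∫ exp (-xᵀ M x) dx` over `ℝⁿ`.
In polar coordinates the homogeneity of the quadratic form gives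
`G(M) = Γ(n/2)/2 · ∫_{Sⁿ⁻¹} (uᵀ M u)^(-n/2) du`, while the substitution `x = D^{1/2} y` gives
`G(D⁻¹) = |D|^{1/2} · G(1) = |D|^{1/2} · Γ(n/2)/2 · |Sⁿ⁻¹|`. Hence
`∫_{Sⁿ⁻¹} (uᵀ D⁻¹ u)^(-n/2) du = |D|^{1/2} · |Sⁿ⁻¹|`, and `|S²| = 4π`.
-/

open Set WithLp Module Real
open scoped ENNReal

theorem lintegral_Ioi_pow_mul_exp_neg_mul_sq (k : ℕ) {b : ℝ} (hb : 0 < b) :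
    ∫⁻ r in Ioi (0 : ℝ), ENNReal.ofReal (r ^ k * exp (-b * r ^ 2)) =
      ENNReal.ofReal (b ^ (-((k : ℝ) + 1) / 2) * (Gamma (((k : ℝ) + 1) / 2) / 2)) := by
  have hk : (-1 : ℝ) < k := by linarith [k.cast_nonneg (α := ℝ)]
  simp_rw [← rpow_natCast _ k, ← rpow_two]
  rw [← ofReal_integral_eq_lintegral_ofReal
    (integrableOn_rpow_mul_exp_neg_mul_rpow hk two_pos hb)
    (ae_restrict_of_forall_mem measurableSet_Ioi fun r (hr : 0 < r) => by positivity),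
    integral_rpow_mul_exp_neg_mul_rpow two_pos hk hb]
  ring_nf

section Polar

variable {E : Type*} [NormedAddCommGroup E] [NormedSpace ℝ E] [FiniteDimensional ℝ E]
  [MeasurableSpace E] [BorelSpace E] (μ : Measure E) [μ.IsAddHaarMeasure]

theorem lintegral_eq_lintegral_toSphere_lintegral_Ioi [Nontrivial E] {g : E → ℝ≥0∞}
    (hg : Measurable g) :
    ∫⁻ x, g x ∂μ = ∫⁻ u : sphere (0 : E) 1, (∫⁻ r in Ioi (0 : ℝ),
      ENNReal.ofReal (r ^ (finrank ℝ E - 1)) * g (r • (u : E))) ∂μ.toSphere := by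
  have hg_polar :
      Measurable fun p : sphere (0 : E) 1 × Ioi (0 : ℝ) => g ((p.2 : ℝ) • (p.1 : E)) :=
    hg.comp (by fun_prop)
  calc ∫⁻ x, g x ∂μ
      = ∫⁻ x : ({0}ᶜ : Set E), g x ∂(μ.comap Subtype.val) := by
        rw [lintegral_subtype_comap (measurableSet_singleton 0).compl, restrict_compl_singleton]
    _ = ∫⁻ p, g ((p.2 : ℝ) • (p.1 : E))
          ∂(μ.toSphere.prod (.volumeIoiPow (finrank ℝ E - 1))) := by
        rw [← (μ.measurePreserving_homeomorphUnitSphereProd).lintegral_comp hg_polar]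
        refine lintegral_congr fun x => ?_
        simp [smul_inv_smul₀ (norm_ne_zero_iff.2 x.2)]
    _ = ∫⁻ u, ∫⁻ r, g ((r : ℝ) • (u : E)) ∂(.volumeIoiPow (finrank ℝ E - 1)) ∂μ.toSphere :=
        lintegral_prod _ hg_polar.aemeasurable
    _ = _ := by
        refine lintegral_congr fun u => ?_
        have hg_ray : Measurable fun r : Ioi (0 : ℝ) => g ((r : ℝ) • (u : E)) :=
          hg.comp (by fun_prop)
        rw [Measure.volumeIoiPow, lintegral_withDensity_eq_lintegral_mul _ (by fun_prop) hg_ray,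
          ← lintegral_subtype_comap measurableSet_Ioi]
        rfl

theorem lintegral_comp_linearMap {f : E →ₗ[ℝ] E} (hf : LinearMap.det f ≠ 0) {g : E → ℝ≥0∞}
    (hg : Measurable g) :
    ∫⁻ x, g (f x) ∂μ = ENNReal.ofReal |LinearMap.det f|⁻¹ * ∫⁻ x, g x ∂μ := by
  rw [← lintegral_map hg f.continuous_of_finiteDimensional.measurable,
    μ.map_linearMap_addHaar_eq_smul_addHaar hf, lintegral_smul_measure, abs_inv, smul_eq_mul]

theorem lintegral_exp_neg_eq_lintegral_toSphere_rpow_mul [Nontrivial E] {Q : E → ℝ}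
    (hQ : Continuous Q) (hQ_smul : ∀ (r : ℝ) (x : E), Q (r • x) = r ^ 2 * Q x)
    (hQ_pos : ∀ u : sphere (0 : E) 1, 0 < Q u) :
    ∫⁻ x, ENNReal.ofReal (exp (-Q x)) ∂μ =
      (∫⁻ u : sphere (0 : E) 1, ENNReal.ofReal (Q u ^ (-(finrank ℝ E : ℝ) / 2)) ∂μ.toSphere) *
        ENNReal.ofReal (Gamma (finrank ℝ E / 2) / 2) := by
  have hdim : ((finrank ℝ E - 1 : ℕ) : ℝ) + 1 = finrank ℝ E := by
    rw [Nat.cast_pred finrank_pos, sub_add_cancel]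
  have h_ray (u : sphere (0 : E) 1) :
      ∫⁻ r in Ioi (0 : ℝ), ENNReal.ofReal (r ^ (finrank ℝ E - 1)) *
          ENNReal.ofReal (exp (-Q (r • (u : E)))) =
        ENNReal.ofReal (Q u ^ (-(finrank ℝ E : ℝ) / 2)) *
          ENNReal.ofReal (Gamma (finrank ℝ E / 2) / 2) := by
    simp only [← ENNReal.ofReal_mul' (exp_nonneg _), hQ_smul, mul_comm _ (Q u), ← neg_mul]
    rw [lintegral_Ioi_pow_mul_exp_neg_mul_sq _ (hQ_pos u), hdim,
      ENNReal.ofReal_mul (rpow_nonneg (hQ_pos u).le _)]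
  rw [lintegral_eq_lintegral_toSphere_lintegral_Ioi μ (by fun_prop)]
  simp_rw [h_ray]
  exact lintegral_mul_const _ (by fun_prop)

end Polar

section QuadraticForm

variable {ι : Type*} [Fintype ι]

theorem mulVec_dotProduct_mulVec_mulVec (S M : Matrix ι ι ℝ) (v : ι → ℝ) :
    S *ᵥ v ⬝ᵥ M *ᵥ (S *ᵥ v) = v ⬝ᵥ (Sᵀ * M * S) *ᵥ v := by
  rw [← mulVec_mulVec, ← mulVec_mulVec, dotProduct_mulVec v Sᵀ, vecMul_transpose]

theorem smul_dotProduct_mulVec_smul (M : Matrix ι ι ℝ) (r : ℝ) (v : ι → ℝ) :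
    r • v ⬝ᵥ M *ᵥ (r • v) = r ^ 2 * (v ⬝ᵥ M *ᵥ v) := by
  rw [mulVec_smul, smul_dotProduct, dotProduct_smul, smul_eq_mul, smul_eq_mul, ← mul_assoc, sq]

theorem continuous_ofLp_dotProduct_mulVec_ofLp (M : Matrix ι ι ℝ) :
    Continuous fun x : EuclideanSpace ℝ ι => ofLp x ⬝ᵥ M *ᵥ ofLp x := by
  simp only [dotProduct, mulVec]
  fun_prop

theorem ofLp_dotProduct_one_mulVec_ofLp [DecidableEq ι] (x : EuclideanSpace ℝ ι) :
    ofLp x ⬝ᵥ (1 : Matrix ι ι ℝ) *ᵥ ofLp x = ‖x‖ ^ 2 := by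
  rw [one_mulVec, ← real_inner_self_eq_norm_sq, EuclideanSpace.inner_eq_star_dotProduct]
  simp

open scoped MatrixOrder in
theorem Matrix.PosDef.exists_transpose_mul_inv_mul_eq_one [DecidableEq ι] {D : Matrix ι ι ℝ}
    (hD : D.PosDef) : ∃ S : Matrix ι ι ℝ, Sᵀ * D⁻¹ * S = 1 ∧ |S.det| = √D.det := by
  set S := CFC.sqrt D
  have hdet : S.det = √D.det := by
    rw [PosSemidef.det_sqrt hD.posSemidef, RCLike.sqrt_real]
  have hunit : IsUnit S.det := by
    rw [hdet]
    exact (sqrt_pos.2 hD.det_pos).ne'.isUnit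
  have hsymm : Sᵀ = S := (CFC.sqrt_nonneg D).posSemidef.isHermitian.eq
  have hsq : S * S = D := CFC.sqrt_mul_sqrt_self D hD.posSemidef.nonneg
  refine ⟨S, ?_, by rw [hdet, abs_of_nonneg (sqrt_nonneg _)]⟩
  rw [hsymm, ← hsq, mul_inv_rev, ← Matrix.mul_assoc, mul_nonsing_inv _ hunit, Matrix.one_mul,
    nonsing_inv_mul _ hunit]

end QuadraticForm

section Gaussian

variable {ι : Type*} [Fintype ι] [DecidableEq ι]

theorem lintegral_exp_neg_dotProduct_transpose_mul_mul_mulVec {S : Matrix ι ι ℝ}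
    (hS : S.det ≠ 0) (M : Matrix ι ι ℝ) :
    ∫⁻ x : EuclideanSpace ℝ ι, ENNReal.ofReal (exp (-(ofLp x ⬝ᵥ (Sᵀ * M * S) *ᵥ ofLp x))) =
      ENNReal.ofReal |S.det|⁻¹ *
        ∫⁻ x : EuclideanSpace ℝ ι, ENNReal.ofReal (exp (-(ofLp x ⬝ᵥ M *ᵥ ofLp x))) := by
  have hdet : LinearMap.det (toEuclideanLin S) = S.det := by
    rw [toEuclideanLin, toLpLin_eq_toLin, LinearMap.det_toLin]
  have hg : Measurable fun x : EuclideanSpace ℝ ι =>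
      ENNReal.ofReal (exp (-(ofLp x ⬝ᵥ M *ᵥ ofLp x))) :=
    (ENNReal.continuous_ofReal.comp (continuous_ofLp_dotProduct_mulVec_ofLp M).neg.rexp).measurable
  rw [← hdet, ← lintegral_comp_linearMap volume (hdet ▸ hS) hg]
  simp only [ofLp_toLpLin, toLin'_apply, mulVec_dotProduct_mulVec_mulVec]

theorem lintegral_toSphere_dotProduct_inv_mulVec_rpow [Nonempty ι] {D : Matrix ι ι ℝ}
    (hD : D.PosDef) :
    ∫⁻ u : sphere (0 : EuclideanSpace ℝ ι) 1, ENNReal.ofReal ((ofLp (u : EuclideanSpace ℝ ι) ⬝ᵥ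
        D⁻¹ *ᵥ ofLp (u : EuclideanSpace ℝ ι)) ^ (-(Fintype.card ι : ℝ) / 2))
        ∂(volume : Measure (EuclideanSpace ℝ ι)).toSphere =
      ENNReal.ofReal √D.det * (volume : Measure (EuclideanSpace ℝ ι)).toSphere univ := by
  have h_polar (M : Matrix ι ι ℝ) (hM : M.PosDef) := by
    simpa only [finrank_euclideanSpace] using
      lintegral_exp_neg_eq_lintegral_toSphere_rpow_mul volume
        (continuous_ofLp_dotProduct_mulVec_ofLp M)
        (fun r x => by rw [ofLp_smul, smul_dotProduct_mulVec_smul])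
        (fun u => hM.dotProduct_mulVec_pos (by simpa using ne_of_mem_sphere u.2 one_ne_zero))
  obtain ⟨S, hS, hdet⟩ := hD.exists_transpose_mul_inv_mul_eq_one
  have hS0 : S.det ≠ 0 := abs_pos.1 (hdet ▸ sqrt_pos.2 hD.det_pos)
  have h_cov := lintegral_exp_neg_dotProduct_transpose_mul_mul_mulVec hS0 D⁻¹
  rw [hS, h_polar 1 PosDef.one, h_polar _ hD.inv, hdet] at h_cov
  simp only [ofLp_dotProduct_one_mulVec_ofLp, norm_eq_of_mem_sphere, one_pow, one_rpow,
    ENNReal.ofReal_one, lintegral_one] at h_cov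
  have hc0 : ENNReal.ofReal (Gamma (Fintype.card ι / 2) / 2) ≠ 0 :=
    (ENNReal.ofReal_pos.2 (div_pos (Gamma_pos_of_pos (by positivity)) two_pos)).ne'
  have h_sqrt : ENNReal.ofReal √D.det * ENNReal.ofReal (√D.det)⁻¹ = 1 := by
    rw [← ENNReal.ofReal_mul (sqrt_nonneg _), mul_inv_cancel₀ (sqrt_pos.2 hD.det_pos).ne',
      ENNReal.ofReal_one]
  rw [← ENNReal.mul_left_inj hc0 ENNReal.ofReal_ne_top, mul_assoc, h_cov, ← mul_assoc, h_sqrt,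
    one_mul]

theorem integral_toSphere_dotProduct_inv_mulVec_rpow [Nonempty ι] {D : Matrix ι ι ℝ}
    (hD : D.PosDef) :
    ∫ u : sphere (0 : EuclideanSpace ℝ ι) 1, (ofLp (u : EuclideanSpace ℝ ι) ⬝ᵥ
        D⁻¹ *ᵥ ofLp (u : EuclideanSpace ℝ ι)) ^ (-(Fintype.card ι : ℝ) / 2)
        ∂(volume : Measure (EuclideanSpace ℝ ι)).toSphere =
      √D.det * (volume : Measure (EuclideanSpace ℝ ι)).toSphere.real univ := by
  have h_nonneg (u : sphere (0 : EuclideanSpace ℝ ι) 1) :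
      0 ≤ ofLp (u : EuclideanSpace ℝ ι) ⬝ᵥ D⁻¹ *ᵥ ofLp (u : EuclideanSpace ℝ ι) := by
    simpa using hD.inv.posSemidef.dotProduct_mulVec_nonneg (ofLp (u : EuclideanSpace ℝ ι))
  have h_meas : Measurable fun u : sphere (0 : EuclideanSpace ℝ ι) 1 =>
      (ofLp (u : EuclideanSpace ℝ ι) ⬝ᵥ D⁻¹ *ᵥ ofLp (u : EuclideanSpace ℝ ι)) ^
        (-(Fintype.card ι : ℝ) / 2) :=
    ((continuous_ofLp_dotProduct_mulVec_ofLp D⁻¹).comp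
      continuous_subtype_val).measurable.pow_const _
  rw [integral_eq_lintegral_of_nonneg_ae (ae_of_all _ fun u => rpow_nonneg (h_nonneg u) _)
    h_meas.aestronglyMeasurable, lintegral_toSphere_dotProduct_inv_mulVec_rpow hD,
    ENNReal.toReal_mul, ENNReal.toReal_ofReal (sqrt_nonneg _), measureReal_def]

end Gaussian

theorem toSphere_volume_real_univ_fin_three :
    (volume : Measure (EuclideanSpace ℝ (Fin 3))).toSphere.real univ = 4 * π := by
  rw [Measure.toSphere_real_apply_univ, measureReal_def, EuclideanSpace.volume_ball_fin_three,
    finrank_euclideanSpace_fin]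
  simp only [ENNReal.ofReal_one, one_pow, one_mul,
    ENNReal.toReal_ofReal (by positivity : 0 ≤ π * 4 / 3)]
  ring

/-- The tensor ODF `Φ(u) = (4π |D|^{1/2})⁻¹ (uᵀ D⁻¹ u)^{-3/2}`
of a symmetric positive definite `D` has unit integral over the unit
sphere. -/
theorem tensor_odf_unit_integral
    (D : Matrix (Fin 3) (Fin 3) ℝ) (hD : D.PosDef) :
    (∫ u : sphere (0 : EuclideanSpace ℝ (Fin 3)) 1,
        1 / (4 * Real.pi * Real.sqrt D.det) *
          (((fun i => (u : EuclideanSpace ℝ (Fin 3)) i) ⬝ᵥ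
              D⁻¹.mulVec (fun i => (u : EuclideanSpace ℝ (Fin 3)) i))
            ^ (-(3 : ℝ) / 2)) ∂sphereMeasure) = 1 := by
  have h := integral_toSphere_dotProduct_inv_mulVec_rpow (ι := Fin 3) hD
  rw [Fintype.card_fin, Nat.cast_ofNat, toSphere_volume_real_univ_fin_three] at h
  rw [integral_const_mul, sphereMeasure]
  eta_reduce
  rw [h]
  field_simp [(sqrt_pos.2 hD.det_pos).ne', pi_ne_zero]
end
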